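/- Let Ω ⊂ ℝ^n be a bounded C¹ domain with connected C¹ boundary, let k ∈ ℤ, and let u ∈ W^{1,n}(Ω, ℝ^n) be such that |tr_{∂Ω} u| = 1 a.e. and deg(u, ∂Ω) = k, where the degree is computed by deg(u,∂Ω) = (1/|𝔹^n|)∫_Ω Jac(u). Then ∫_Ω |du|^n ≥ n^{n/2} |𝔹^n| |k|, where |du| is the Frobenius norm of the differential. -/

import Mathlib

/-!
AM–GM for the eigenvalues of the positive semidefinite matrix `Aᵀ A` gives the pointwise
Hadamard-type bound `n^{n/2} |det A| ≤ |A|ⁿ`. Integrating it over `Ω` for `A = du` and using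
`|∫_Ω Jac u| = |k| |𝔹ⁿ|` gives the energy bound.
-/

open MeasureTheory

/-- Frobenius norm of a real square matrix: `‖A‖² = tr(Aᵀ A)`. -/
noncomputable def frobNorm {n : ℕ} (A : Matrix (Fin n) (Fin n) ℝ) : ℝ :=
  Real.sqrt (Matrix.trace (A.transpose * A))

open Finset in
theorem Real.prod_le_sum_div_card_pow {ι : Type*} (s : Finset ι) {z : ι → ℝ}
    (hz : ∀ i ∈ s, 0 ≤ z i) : ∏ i ∈ s, z i ≤ ((∑ i ∈ s, z i) / #s) ^ #s := by
  rcases s.eq_empty_or_nonempty with rfl | hs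
  · simp
  have hcard : (#s : ℝ) ≠ 0 := by exact_mod_cast hs.card_ne_zero
  have hprod : 0 ≤ ∏ i ∈ s, z i := prod_nonneg hz
  have amgm := Real.geom_mean_le_arith_mean s 1 z (fun _ _ => zero_le_one)
    (by simpa using hs.card_pos) hz
  simp only [Pi.one_apply, Real.rpow_one, one_mul, sum_const, nsmul_eq_mul, mul_one] at amgm
  calc ∏ i ∈ s, z i = ((∏ i ∈ s, z i) ^ (#s : ℝ)⁻¹) ^ #s := by
        rw [← Real.rpow_natCast, ← Real.rpow_mul hprod, inv_mul_cancel₀ hcard, Real.rpow_one]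
    _ ≤ ((∑ i ∈ s, z i) / #s) ^ #s := by gcongr

namespace Matrix

variable {m : Type*} [Fintype m]

theorem trace_transpose_mul_self_nonneg (A : Matrix m m ℝ) : 0 ≤ (Aᵀ * A).trace := by
  classical
  simpa only [conjTranspose_eq_transpose_of_trivial] using
    (posSemidef_conjTranspose_mul_self A).trace_nonneg

variable [DecidableEq m]

theorem PosSemidef.det_le_trace_div_card_pow {B : Matrix m m ℝ}
    (hB : B.PosSemidef) : B.det ≤ (B.trace / Fintype.card m) ^ Fintype.card m := by
  rw [hB.isHermitian.det_eq_prod_eigenvalues, hB.isHermitian.trace_eq_sum_eigenvalues]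
  exact Real.prod_le_sum_div_card_pow Finset.univ fun i _ => hB.eigenvalues_nonneg i

theorem det_sq_le_trace_transpose_mul_self_div_card_pow (A : Matrix m m ℝ) :
    A.det ^ 2 ≤ ((Aᵀ * A).trace / Fintype.card m) ^ Fintype.card m := by
  have hPSD : (Aᵀ * A).PosSemidef := by
    simpa only [conjTranspose_eq_transpose_of_trivial] using posSemidef_conjTranspose_mul_self A
  simpa only [det_mul, det_transpose, sq] using hPSD.det_le_trace_div_card_pow

end Matrix

open scoped Matrix

theorem sq_frobNorm {n : ℕ} (A : Matrix (Fin n) (Fin n) ℝ) : frobNorm A ^ 2 = (Aᵀ * A).trace :=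
  Real.sq_sqrt A.trace_transpose_mul_self_nonneg

theorem frobNorm_nonneg {n : ℕ} (A : Matrix (Fin n) (Fin n) ℝ) : 0 ≤ frobNorm A :=
  Real.sqrt_nonneg _

theorem natCast_rpow_half_self_sq (n : ℕ) : ((n : ℝ) ^ ((n : ℝ) / 2)) ^ 2 = (n : ℝ) ^ n := by
  rw [← Real.rpow_natCast _ 2, ← Real.rpow_mul n.cast_nonneg]
  norm_num

theorem rpow_half_mul_abs_det_le_frobNorm_pow {n : ℕ} (A : Matrix (Fin n) (Fin n) ℝ) :
    (n : ℝ) ^ ((n : ℝ) / 2) * |A.det| ≤ frobNorm A ^ n := by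
  have hpow : (0 : ℝ) < (n : ℝ) ^ n := by exact_mod_cast Nat.pow_self_pos
  have hsq : (n : ℝ) ^ n * A.det ^ 2 ≤ (frobNorm A ^ n) ^ 2 := by
    have := A.det_sq_le_trace_transpose_mul_self_div_card_pow
    rw [Fintype.card_fin, ← sq_frobNorm, div_pow, le_div_iff₀' hpow] at this
    rwa [← pow_mul, mul_comm n 2, pow_mul]
  rw [← pow_le_pow_iff_left₀ (by positivity) (pow_nonneg (frobNorm_nonneg A) n) two_ne_zero,
    mul_pow, natCast_rpow_half_self_sq, sq_abs]
  exact hsq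

theorem mul_abs_integral_le_integral_of_mul_abs_le {α : Type*} [MeasurableSpace α]
    {μ : Measure α} {f g : α → ℝ} {c : ℝ} (hc : 0 ≤ c) (hf : Integrable f μ)
    (hgf : ∀ x, c * |g x| ≤ f x) : c * |∫ x, g x ∂μ| ≤ ∫ x, f x ∂μ :=
  calc c * |∫ x, g x ∂μ| ≤ c * ∫ x, |g x| ∂μ := by gcongr; exact abs_integral_le_integral_abs
    _ = ∫ x, c * |g x| ∂μ := (integral_const_mul c _).symm
    _ ≤ ∫ x, f x ∂μ := integral_mono_of_nonneg (.of_forall fun x => by positivity) hf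
        (.of_forall hgf)

theorem energy_lower_bound_by_degree_general {n : ℕ}
    (Ω : Set (EuclideanSpace ℝ (Fin n)))
    (du : EuclideanSpace ℝ (Fin n) → Matrix (Fin n) (Fin n) ℝ)
    (hEnergyInt : IntegrableOn (fun x => frobNorm (du x) ^ n) Ω volume)
    (k : ℤ)
    (hdeg : ∫ x in Ω, (du x).det =
      (k : ℝ) * (volume (Metric.ball (0 : EuclideanSpace ℝ (Fin n)) 1)).toReal) :
    ∫ x in Ω, frobNorm (du x) ^ n ≥
      (n : ℝ) ^ ((n : ℝ) / 2) *
        (volume (Metric.ball (0 : EuclideanSpace ℝ (Fin n)) 1)).toReal * |(k : ℝ)| := by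
  calc (n : ℝ) ^ ((n : ℝ) / 2) *
        (volume (Metric.ball (0 : EuclideanSpace ℝ (Fin n)) 1)).toReal * |(k : ℝ)|
      = (n : ℝ) ^ ((n : ℝ) / 2) * |∫ x in Ω, (du x).det| := by
        rw [hdeg, abs_mul, abs_of_nonneg ENNReal.toReal_nonneg]; ring
    _ ≤ ∫ x in Ω, frobNorm (du x) ^ n :=
        mul_abs_integral_le_integral_of_mul_abs_le (by positivity) hEnergyInt
          fun x => rpow_half_mul_abs_det_le_frobNorm_pow (du x)

/-- Lower bound of the `n`-energy in terms of the prescribed degree: if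
`u : Ω → ℝⁿ` has differential `du` on the bounded domain `Ω`, and its degree
(computed via `deg = (1/|𝔹ⁿ|) ∫_Ω Jac u`) equals `k ∈ ℤ`, then
`∫_Ω |du|ⁿ ≥ n^{n/2} |𝔹ⁿ| |k|`, with `|du|` the Frobenius norm of the
differential. -/
theorem energy_lower_bound_by_degree {n : ℕ} (hn : 1 ≤ n)
    (Ω : Set (EuclideanSpace ℝ (Fin n))) (hΩmeas : MeasurableSet Ω)
    (hΩbdd : Bornology.IsBounded Ω) (hΩopen : IsOpen Ω)
    (u : EuclideanSpace ℝ (Fin n) → EuclideanSpace ℝ (Fin n))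
    (du : EuclideanSpace ℝ (Fin n) → Matrix (Fin n) (Fin n) ℝ)
    (hdu : ∀ x ∈ Ω, HasFDerivAt u (Matrix.toEuclideanCLM (𝕜 := ℝ) (du x)) x)
    (hJacInt : IntegrableOn (fun x => (du x).det) Ω volume)
    (hEnergyInt : IntegrableOn (fun x => frobNorm (du x) ^ n) Ω volume)
    (k : ℤ)
    (hdeg : ∫ x in Ω, (du x).det =
      (k : ℝ) * (volume (Metric.ball (0 : EuclideanSpace ℝ (Fin n)) 1)).toReal) :
    ∫ x in Ω, frobNorm (du x) ^ n ≥
      (n : ℝ) ^ ((n : ℝ) / 2) *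
        (volume (Metric.ball (0 : EuclideanSpace ℝ (Fin n)) 1)).toReal * |(k : ℝ)| :=
  energy_lower_bound_by_degree_general Ω du hEnergyInt k hdeg
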